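/- arXiv:1910.12480 — 3 statements merged into one kernel-verified Lean document; each statement's English description precedes it below -/
import Mathlib

section
/- Let q ≥ 2 and let H be the graph obtained from a path y₁y₂…y_{2q+1} by adding a vertex x adjacent to y₁, y₃, …, y_{2q+1} (a semi-fan with center x). Then H has an orientation D such that the out-degree of x is 3, the out-degrees of y₁ and y_{2q+1} are 0, the out-degree of y_i is 1 for every even i, and the out-degree of y_i is 2 for every odd i with 1 < i < 2q+1. -/
/-- The semi-fan: a path `v₁ … v_{2q+1}` (vertex `some i` is `v_{i+1}`) together with a
center `u` (vertex `none`) adjacent to `v₁, v₃, …, v_{2q+1}` (the `some i` with `i` even). -/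
def semiFan (q : ℕ) : SimpleGraph (Option (Fin (2 * q + 1))) :=
  SimpleGraph.fromRel (fun a b =>
    (∃ i j : Fin (2 * q + 1), a = some i ∧ b = some j ∧ (j : ℕ) = (i : ℕ) + 1) ∨
    (∃ i : Fin (2 * q + 1), a = none ∧ b = some i ∧ (i : ℕ) % 2 = 0))

/-!
The orientation is explicit: the center points to `v₁`, `v₃` and `v_{2q+1}`, the path is oriented
`v₁ ← v₂ ← v₃ → v₄ → ⋯ → v_{2q+1}`, and the spokes at `v₅, v₇, …, v_{2q-1}` point to the center.
Every out-degree can then be read off directly; `q ≥ 2` keeps `v₃` an inner vertex distinct from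
`v_{2q+1}`.
-/

section

variable {q : ℕ}

@[simp]
lemma semiFan_adj_none_some (b : Fin (2 * q + 1)) :
    (semiFan q).Adj none (some b) ↔ (b : ℕ) % 2 = 0 := by
  simp [semiFan]

@[simp]
lemma semiFan_adj_some_none (a : Fin (2 * q + 1)) :
    (semiFan q).Adj (some a) none ↔ (a : ℕ) % 2 = 0 :=
  (semiFan q).adj_comm _ _ |>.trans (semiFan_adj_none_some a)

@[simp]
lemma semiFan_adj_some_some (a b : Fin (2 * q + 1)) :
    (semiFan q).Adj (some a) (some b) ↔ (b : ℕ) = a + 1 ∨ (a : ℕ) = b + 1 := by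
  simp only [semiFan, SimpleGraph.fromRel_adj, ne_eq, Option.some.injEq, reduceCtorEq,
    false_and, exists_false, or_false]
  constructor
  · rintro ⟨-, ⟨i, j, rfl, rfl, h⟩ | ⟨i, j, rfl, rfl, h⟩⟩ <;> omega
  · intro h
    refine ⟨fun hab => by subst hab; omega, ?_⟩
    rcases h with h | h
    · exact Or.inl ⟨a, b, rfl, rfl, h⟩
    · exact Or.inr ⟨b, a, rfl, rfl, h⟩

def outNbrs {V : Type*} [Fintype V] (D : V → V → Bool) (u : V) : Finset V :=
  Finset.univ.filter (fun w => D u w = true)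

def fanOrientation (q : ℕ) : Option (Fin (2 * q + 1)) → Option (Fin (2 * q + 1)) → Bool
  | none, none => false
  | none, some b => decide ((b : ℕ) = 0 ∨ (b : ℕ) = 2 ∨ (b : ℕ) = 2 * q)
  | some a, none => decide ((a : ℕ) % 2 = 0 ∧ 4 ≤ (a : ℕ) ∧ (a : ℕ) < 2 * q)
  | some a, some b => decide (((a : ℕ) = 1 ∧ (b : ℕ) = 0) ∨ ((a : ℕ) = 2 ∧ (b : ℕ) = 1) ∨
      (2 ≤ (a : ℕ) ∧ (b : ℕ) = (a : ℕ) + 1))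

lemma fanOrientation_or_swap_iff_adj (u v : Option (Fin (2 * q + 1))) :
    (fanOrientation q u v = true ∨ fanOrientation q v u = true) ↔ (semiFan q).Adj u v := by
  rcases u with _ | a <;> rcases v with _ | b <;>
    simp [fanOrientation, -Fin.val_eq_zero_iff] <;> omega

lemma fanOrientation_asymm {u v : Option (Fin (2 * q + 1))} (h : fanOrientation q u v = true) :
    fanOrientation q v u = false := by
  rcases u with _ | a <;> rcases v with _ | b <;>
    simp_all [fanOrientation, -Fin.val_eq_zero_iff] <;> omega

lemma outNbrs_none (hq : 2 ≤ q) :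
    outNbrs (fanOrientation q) none = {some 0, some ⟨2, by omega⟩, some (Fin.last _)} := by
  ext (_ | b) <;> simp [outNbrs, fanOrientation, Fin.ext_iff, -Fin.val_eq_zero_iff]

lemma outNbrs_some_of_end (hq : 2 ≤ q) {i : Fin (2 * q + 1)}
    (hi : (i : ℕ) = 0 ∨ (i : ℕ) = 2 * q) : outNbrs (fanOrientation q) (some i) = ∅ := by
  ext (_ | b) <;> simp [outNbrs, fanOrientation, -Fin.val_eq_zero_iff] <;> omega

lemma outNbrs_some_one {i : Fin (2 * q + 1)} (hi : (i : ℕ) = 1) :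
    outNbrs (fanOrientation q) (some i) = {some 0} := by
  ext (_ | b) <;> simp [outNbrs, fanOrientation, Fin.ext_iff, -Fin.val_eq_zero_iff] <;> omega

lemma outNbrs_some_of_three_le {i : Fin (2 * q + 1)} (hi : (i : ℕ) % 2 = 1) (h3 : 3 ≤ (i : ℕ)) :
    outNbrs (fanOrientation q) (some i) = {some ⟨(i : ℕ) + 1, by have := i.isLt; omega⟩} := by
  ext (_ | b) <;> simp [outNbrs, fanOrientation, Fin.ext_iff, -Fin.val_eq_zero_iff] <;> omega

lemma outNbrs_some_two {i : Fin (2 * q + 1)} (hq : 2 ≤ q) (hi : (i : ℕ) = 2) :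
    outNbrs (fanOrientation q) (some i) = {some ⟨1, by omega⟩, some ⟨3, by omega⟩} := by
  ext (_ | b) <;> simp [outNbrs, fanOrientation, Fin.ext_iff, -Fin.val_eq_zero_iff] <;> omega

lemma outNbrs_some_of_four_le {i : Fin (2 * q + 1)} (hi : (i : ℕ) % 2 = 0) (h4 : 4 ≤ (i : ℕ))
    (h2q : (i : ℕ) < 2 * q) :
    outNbrs (fanOrientation q) (some i) = {some ⟨(i : ℕ) + 1, by omega⟩, none} := by
  ext (_ | b) <;> simp [outNbrs, fanOrientation, Fin.ext_iff, -Fin.val_eq_zero_iff] <;> omega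

lemma card_outNbrs_none (hq : 2 ≤ q) : (outNbrs (fanOrientation q) none).card = 3 := by
  rw [outNbrs_none hq, Finset.card_eq_three]
  refine ⟨_, _, _, ?_, ?_, ?_, rfl⟩ <;> simp [Fin.ext_iff] <;> omega

lemma card_outNbrs_some_of_odd {i : Fin (2 * q + 1)} (hi : (i : ℕ) % 2 = 1) :
    (outNbrs (fanOrientation q) (some i)).card = 1 := by
  obtain h1 | h3 : (i : ℕ) = 1 ∨ 3 ≤ (i : ℕ) := by omega
  · rw [outNbrs_some_one h1, Finset.card_singleton]
  · rw [outNbrs_some_of_three_le hi h3, Finset.card_singleton]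

lemma card_outNbrs_some_of_even {i : Fin (2 * q + 1)} (hq : 2 ≤ q) (hi : (i : ℕ) % 2 = 0)
    (h0 : 0 < (i : ℕ)) (h2q : (i : ℕ) < 2 * q) :
    (outNbrs (fanOrientation q) (some i)).card = 2 := by
  obtain h2 | h4 : (i : ℕ) = 2 ∨ 4 ≤ (i : ℕ) := by omega
  · rw [outNbrs_some_two hq h2, Finset.card_pair (by simp)]
  · rw [outNbrs_some_of_four_le hi h4 h2q, Finset.card_pair (by simp)]

end

/-- for `q ≥ 2` the semi-fan has an orientation with out-degree `3` at the
center, `0` at the two ends of the path, `1` at `v_i` for even `i`, and `2` at the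
internal `v_i` with odd `i`. (Here `some i` is `v_{i+1}`.) -/
theorem semiFan_orientation (q : ℕ) (hq : 2 ≤ q) :
    ∃ D : Option (Fin (2 * q + 1)) → Option (Fin (2 * q + 1)) → Bool,
      (∀ u v, (D u v = true ∨ D v u = true) ↔ (semiFan q).Adj u v) ∧
      (∀ u v, D u v = true → D v u = false) ∧
      (Finset.univ.filter (fun w => D none w = true)).card = 3 ∧
      (∀ i : Fin (2 * q + 1), (i : ℕ) = 0 ∨ (i : ℕ) = 2 * q →
        (Finset.univ.filter (fun w => D (some i) w = true)).card = 0) ∧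
      (∀ i : Fin (2 * q + 1), (i : ℕ) % 2 = 1 →
        (Finset.univ.filter (fun w => D (some i) w = true)).card = 1) ∧
      (∀ i : Fin (2 * q + 1), (i : ℕ) % 2 = 0 → 0 < (i : ℕ) → (i : ℕ) < 2 * q →
        (Finset.univ.filter (fun w => D (some i) w = true)).card = 2) :=
  ⟨fanOrientation q, fanOrientation_or_swap_iff_adj, fun _ _ => fanOrientation_asymm,
    card_outNbrs_none hq,
    fun _ hi => Finset.card_eq_zero.mpr (outNbrs_some_of_end hq hi),
    fun _ => card_outNbrs_some_of_odd,
    fun _ => card_outNbrs_some_of_even hq⟩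
end

section
/- Let G be a triangle-free graph, L a list assignment, and let v₁, v₂, v₃ be three consecutive vertices of an induced path in G with |L(v₂)| = 2, L(v₂) ⊆ L(v₃), L(v₂) ⊆ L(v₁). Suppose v₁ and v₃ have a common neighbour w ≠ v₂. Let G' be obtained from G by identifying v₁ and v₃ into a vertex v* with L(v*) = L(v₂) (assuming v₁ and v₃ are non-adjacent, which holds since G is triangle-free). If G' has a proper L-colouring, then G has a proper L-colouring. -/
/-- A proper colouring of `G` from the lists `L`. -/
def ProperListColoring {V : Type} (G : SimpleGraph V) (L : V → Finset ℕ) (φ : V → ℕ) : Prop :=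
  (∀ v, φ v ∈ L v) ∧ ∀ u v, G.Adj u v → φ u ≠ φ v

/-- The graph obtained from `G` by identifying `v₃` into `v₁` (merged vertex `v₁`). -/
def identifyVerts {V : Type} (G : SimpleGraph V) (u w : V) : SimpleGraph V :=
  SimpleGraph.fromRel (fun a b =>
    (G.Adj a b ∧ a ≠ w ∧ b ≠ w) ∨ (a = u ∧ G.Adj w b ∧ b ≠ w))

section identifyVerts

variable {V : Type} {G : SimpleGraph V} {u w : V}

theorem identifyVerts_adj_of_adj {a b : V} (hab : G.Adj a b) (ha : a ≠ w) (hb : b ≠ w) :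
    (identifyVerts G u w).Adj a b :=
  ⟨hab.ne, Or.inl (Or.inl ⟨hab, ha, hb⟩)⟩

theorem identifyVerts_adj_of_adj_right {b : V} (hwb : G.Adj w b) (hb : b ≠ w) (hub : u ≠ b) :
    (identifyVerts G u w).Adj u b :=
  ⟨hub, Or.inl (Or.inr ⟨rfl, hwb, hb⟩)⟩

variable [DecidableEq V] {ψ : V → ℕ}

theorem update_ne_of_adj_of_identifyVerts (huw : ¬ G.Adj u w)
    (hψ : ∀ x y, (identifyVerts G u w).Adj x y → ψ x ≠ ψ y) {a b : V} (hab : G.Adj a b) :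
    Function.update ψ w (ψ u) a ≠ Function.update ψ w (ψ u) b := by
  have neighbour_of_w :
      ∀ x, G.Adj w x → Function.update ψ w (ψ u) w ≠ Function.update ψ w (ψ u) x := by
    intro x hwx
    have hxw : x ≠ w := hwx.ne.symm
    have hux : u ≠ x := by rintro rfl; exact huw hwx.symm
    simpa [hxw] using hψ u x (identifyVerts_adj_of_adj_right hwx hxw hux)
  by_cases ha : a = w
  · subst ha; exact neighbour_of_w b hab
  by_cases hb : b = w
  · subst hb; exact (neighbour_of_w a hab.symm).symm
  simpa [ha, hb] using hψ a b (identifyVerts_adj_of_adj hab ha hb)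

theorem properListColoring_update_of_identifyVerts {L : V → Finset ℕ} (huw : ¬ G.Adj u w)
    (hu : ψ u ∈ L u) (hw : ψ u ∈ L w) (hL : ∀ x, x ≠ w → x ≠ u → ψ x ∈ L x)
    (hψ : ∀ x y, (identifyVerts G u w).Adj x y → ψ x ≠ ψ y) :
    ProperListColoring G L (Function.update ψ w (ψ u)) := by
  refine ⟨fun x => ?_, fun a b hab => update_ne_of_adj_of_identifyVerts huw hψ hab⟩
  by_cases hxw : x = w
  · subst hxw; simpa using hw
  by_cases hxu : x = u
  · subst hxu; simpa [hxw] using hu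
  simpa [hxw] using hL x hxw hxu

end identifyVerts

theorem coloring_of_identification_path_general {V : Type} (G : SimpleGraph V)
    (v₁ v₂ v₃ : V)
    (h13 : ¬ G.Adj v₁ v₃)
    (L : V → Finset ℕ)
    (hL23 : L v₂ ⊆ L v₃) (hL21 : L v₂ ⊆ L v₁)
    (h : ∃ ψ : V → ℕ, ψ v₁ ∈ L v₂ ∧ (∀ x, x ≠ v₃ → x ≠ v₁ → ψ x ∈ L x) ∧
      ∀ x y, (identifyVerts G v₁ v₃).Adj x y → ψ x ≠ ψ y) :
    ∃ φ : V → ℕ, ProperListColoring G L φ := by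
  classical
  obtain ⟨ψ, hψ₁, hψL, hψ⟩ := h
  exact ⟨_, properListColoring_update_of_identifyVerts h13 (hL21 hψ₁) (hL23 hψ₁) hψL hψ⟩

/-- in a triangle-free graph, with `v₁v₂v₃` an induced path,
`|L(v₂)| = 2`, `L(v₂) ⊆ L(v₁) ∩ L(v₃)`, and `v₁, v₃` having a common neighbour `w ≠ v₂`:
if the graph obtained by identifying `v₁` and `v₃` into a vertex `v*` with list `L(v₂)`
has a proper colouring, then `G` has a proper `L`-colouring. -/
theorem coloring_of_identification_path {V : Type} (G : SimpleGraph V)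
    (htf : G.CliqueFree 3) (v₁ v₂ v₃ w : V)
    (h12 : G.Adj v₁ v₂) (h23 : G.Adj v₂ v₃) (h13 : ¬ G.Adj v₁ v₃)
    (L : V → Finset ℕ)
    (hL2 : (L v₂).card = 2) (hL23 : L v₂ ⊆ L v₃) (hL21 : L v₂ ⊆ L v₁)
    (hw : w ≠ v₂) (hw1 : G.Adj v₁ w) (hw3 : G.Adj v₃ w)
    (h : ∃ ψ : V → ℕ, ψ v₁ ∈ L v₂ ∧ (∀ x, x ≠ v₃ → x ≠ v₁ → ψ x ∈ L x) ∧
      ∀ x y, (identifyVerts G v₁ v₃).Adj x y → ψ x ≠ ψ y) :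
    ∃ φ : V → ℕ, ProperListColoring G L φ :=
  coloring_of_identification_path_general G v₁ v₂ v₃ h13 L hL23 hL21 h
end

section
/- Let G be a bipartite graph and let d : V(G) → ℕ be a function with Σ_v d(v) = |E(G)|. If G has an orientation D in which every vertex v has out-degree exactly d(v), then G is L-colourable for every list assignment L with |L(v)| ≥ d(v) + 1 for all v. -/
section Kernel

variable {V : Type*} (r : V → V → Prop)

structure IsKernel (T K : Set V) : Prop where
  subset : K ⊆ T
  independent : ∀ u ∈ K, ∀ w ∈ K, ¬ r u w
  absorbing : ∀ v ∈ T, v ∉ K → ∃ w ∈ K, r v w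

variable {r}

theorem IsKernel.nonempty {T K : Set V} (hK : IsKernel r T K) (hT : T.Nonempty) :
    K.Nonempty := by
  obtain ⟨v, hv⟩ := hT
  by_cases hvK : v ∈ K
  · exact ⟨v, hvK⟩
  · obtain ⟨w, hw, -⟩ := hK.absorbing v hv hvK
    exact ⟨w, hw⟩

variable (r) (c : V → Fin 2)

def safeVertices (T : Set V) : Set V →o Set V where
  toFun X := {a | a ∈ T ∧ c a = 0 ∧ ∀ b ∈ T, r a b → ∃ x ∈ X, r b x}
  monotone' _ _ hXY _ ha :=
    ⟨ha.1, ha.2.1, fun b hb hab => (ha.2.2 b hb hab).imp fun _ hx => ⟨hXY hx.1, hx.2⟩⟩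

variable {r c}

theorem isKernel_of_safeVertices_eq (hc : ∀ u v, r u v → c u ≠ c v) {T X : Set V}
    (hX : safeVertices r c T X = X) :
    IsKernel r T (X ∪ {b | b ∈ T ∧ c b ≠ 0 ∧ ∀ x ∈ X, ¬ r b x}) := by
  have hXmem : ∀ a, a ∈ X ↔ a ∈ T ∧ c a = 0 ∧ ∀ b ∈ T, r a b → ∃ x ∈ X, r b x := fun a =>
    (Set.ext_iff.mp hX a).symm
  refine ⟨?_, ?_, ?_⟩
  · rintro v (hv | hv)
    exacts [((hXmem v).mp hv).1, hv.1]
  · rintro u (hu | hu) w (hw | hw) huw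
    · exact hc u w huw (((hXmem u).mp hu).2.1.trans ((hXmem w).mp hw).2.1.symm)
    · obtain ⟨x, hx, hwx⟩ := ((hXmem u).mp hu).2.2 w hw.1 huw
      exact hw.2.2 x hx hwx
    · exact hu.2.2 w hw huw
    · exact hc u w huw ((Fin.eq_one_of_ne_zero _ hu.2.1).trans
        (Fin.eq_one_of_ne_zero _ hw.2.1).symm)
  · intro v hvT hvK
    obtain ⟨hvX, hvY⟩ := not_or.mp hvK
    by_cases hcv : c v = 0
    · obtain ⟨b, hbT, hvb, hbX⟩ : ∃ b ∈ T, r v b ∧ ∀ x ∈ X, ¬ r b x := by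
        by_contra! h
        exact hvX ((hXmem v).mpr ⟨hvT, hcv, h⟩)
      have hcb : c b ≠ 0 := fun h => hc v b hvb (hcv.trans h.symm)
      exact ⟨b, Or.inr ⟨hbT, hcb, hbX⟩, hvb⟩
    · obtain ⟨x, hx, hvx⟩ : ∃ x ∈ X, r v x := by
        by_contra! h
        exact hvY ⟨hvT, hcv, h⟩
      exact ⟨x, Or.inl hx, hvx⟩

theorem exists_isKernel_of_two_coloring (hc : ∀ u v, r u v → c u ≠ c v) (T : Set V) :
    ∃ K, IsKernel r T K :=
  ⟨_, isKernel_of_safeVertices_eq hc (OrderHom.map_lfp (safeVertices r c T))⟩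

end Kernel

section ListColoring

variable {V : Type*} {r : V → V → Prop} [DecidableRel r]

theorem card_filter_lt_card_erase_of_isKernel {S : Finset V} {L : V → Finset ℕ} {c : ℕ}
    {K : Set V} [DecidablePred (· ∈ K)] (hK : IsKernel r {v | v ∈ S ∧ c ∈ L v} K)
    (hdeg : ∀ v ∈ S, (S.filter (r v)).card < (L v).card) {v : V} (hv : v ∈ S.filter (· ∉ K)) :
    ((S.filter (· ∉ K)).filter (r v)).card < ((L v).erase c).card := by
  obtain ⟨hvS, hvK⟩ := Finset.mem_filter.mp hv
  have hsub : (S.filter (· ∉ K)).filter (r v) ⊆ S.filter (r v) :=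
    Finset.filter_subset_filter _ (Finset.filter_subset _ _)
  by_cases hcv : c ∈ L v
  · obtain ⟨w, hwK, hvw⟩ := hK.absorbing v ⟨hvS, hcv⟩ hvK
    have hlost : (S.filter (· ∉ K)).filter (r v) ⊂ S.filter (r v) :=
      (Finset.ssubset_iff_of_subset hsub).mpr
        ⟨w, Finset.mem_filter.mpr ⟨(hK.subset hwK).1, hvw⟩, by simp [hwK]⟩
    have hout := Finset.card_lt_card hlost
    have hdeg_v := hdeg v hvS
    rw [Finset.card_erase_of_mem hcv]
    omega
  · rw [Finset.erase_eq_of_notMem hcv]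
    exact (Finset.card_le_card hsub).trans_lt (hdeg v hvS)

theorem exists_listColoring_of_forall_isKernel (hker : ∀ T : Set V, ∃ K, IsKernel r T K)
    (S : Finset V) (L : V → Finset ℕ) (hdeg : ∀ v ∈ S, (S.filter (r v)).card < (L v).card) :
    ∃ φ : V → ℕ, (∀ v ∈ S, φ v ∈ L v) ∧ ∀ u ∈ S, ∀ v ∈ S, r u v → φ u ≠ φ v := by
  classical
  induction S using Finset.strongInduction generalizing L with
  | H S ih =>
  rcases S.eq_empty_or_nonempty with rfl | ⟨v₀, hv₀⟩
  · exact ⟨fun _ => 0, by simp, by simp⟩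
  obtain ⟨c, hc⟩ := Finset.card_pos.mp ((Nat.zero_le _).trans_lt (hdeg v₀ hv₀))
  obtain ⟨K, hK⟩ := hker {v | v ∈ S ∧ c ∈ L v}
  obtain ⟨k, hk⟩ := hK.nonempty ⟨v₀, hv₀, hc⟩
  have hS' : S.filter (· ∉ K) ⊂ S :=
    Finset.filter_ssubset.mpr ⟨k, (hK.subset hk).1, not_not.mpr hk⟩
  obtain ⟨φ, hφL, hφr⟩ := ih _ hS' (fun v => (L v).erase c)
    fun v hv => card_filter_lt_card_erase_of_isKernel hK hdeg hv
  have hφ : ∀ v ∈ S, v ∉ K → φ v ∈ (L v).erase c := fun v hv hvK =>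
    hφL v (Finset.mem_filter.mpr ⟨hv, hvK⟩)
  refine ⟨fun v => if v ∈ K then c else φ v, fun v hv => ?_, fun u hu v hv huv => ?_⟩
  · dsimp only
    split_ifs with hvK
    exacts [(hK.subset hvK).2, Finset.mem_of_mem_erase (hφ v hv hvK)]
  · dsimp only
    split_ifs with huK hvK hvK
    · exact absurd huv (hK.independent u huK v hvK)
    · exact fun h => Finset.ne_of_mem_erase (hφ v hv hvK) h.symm
    · exact Finset.ne_of_mem_erase (hφ u hu huK)
    · exact hφr u (Finset.mem_filter.mpr ⟨hu, huK⟩) v (Finset.mem_filter.mpr ⟨hv, hvK⟩) huv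

end ListColoring

theorem bipartite_alon_tarsi_general {V : Type} [Fintype V]
    (G : SimpleGraph V) (hbip : G.Colorable 2)
    (d : V → ℕ)
    (D : V → V → Bool)
    (hDadj : ∀ u v, (D u v = true ∨ D v u = true) ↔ G.Adj u v)
    (hDdeg : ∀ v, (Finset.univ.filter (fun w => D v w = true)).card = d v)
    (L : V → Finset ℕ) (hL : ∀ v, d v + 1 ≤ (L v).card) :
    ∃ φ : V → ℕ, ProperListColoring G L φ := by
  obtain ⟨C⟩ := hbip
  have hker : ∀ T : Set V, ∃ K, IsKernel (fun u v => D u v = true) T K :=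
    exists_isKernel_of_two_coloring fun u v huv => C.valid ((hDadj u v).mp (Or.inl huv))
  obtain ⟨φ, hφL, hφD⟩ := exists_listColoring_of_forall_isKernel hker Finset.univ L
    fun v _ => (hDdeg v).trans_lt (hL v)
  refine ⟨φ, fun v => hφL v (Finset.mem_univ v), fun u v huv => ?_⟩
  rcases (hDadj u v).mpr huv with huv | hvu
  · exact hφD u (Finset.mem_univ u) v (Finset.mem_univ v) huv
  · exact (hφD v (Finset.mem_univ v) u (Finset.mem_univ u) hvu).symm

/-- a bipartite graph with an orientation whose out-degrees are given by `d`
(with `∑ d(v) = |E|`) is colourable from any lists with `|L(v)| ≥ d(v) + 1` (Alon–Tarsi). -/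
theorem bipartite_alon_tarsi {V : Type} [Fintype V] [DecidableEq V]
    (G : SimpleGraph V) [DecidableRel G.Adj] (hbip : G.Colorable 2)
    (d : V → ℕ) (hsum : ∑ v, d v = G.edgeFinset.card)
    (D : V → V → Bool)
    (hDadj : ∀ u v, (D u v = true ∨ D v u = true) ↔ G.Adj u v)
    (hDasymm : ∀ u v, D u v = true → D v u = false)
    (hDdeg : ∀ v, (Finset.univ.filter (fun w => D v w = true)).card = d v)
    (L : V → Finset ℕ) (hL : ∀ v, d v + 1 ≤ (L v).card) :
    ∃ φ : V → ℕ, ProperListColoring G L φ :=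
  bipartite_alon_tarsi_general G hbip d D hDadj hDdeg L hL
end
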